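/- (Theorem 3.5: correctness of SLD-Merge.) Let e ∈ spine1(e1*) and let F = { f ∈ spine2(e2*) : r(f) > r(e) }. If F = ∅, then p(e) = p1(e) (both defined or both undefined). If F ≠ ∅ with minimum-rank element f0, then: if p1(e) is defined and r(p1(e)) < r(f0) then p(e) = p1(e); otherwise p(e) = f0. The symmetric statement holds for e ∈ spine2(e2*). Together with the fact that edges off these two spines keep their parents, this shows that the SLD of G is obtained from the SLDs of G1 and G2 by merging the two rank-sorted spines spine1(e1*) and spine2(e2*). -/

import Mathlib

/- Single tree setting: `G` is a finite tree with injective edge ranks `r`.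
`edgesBetween G e f` is the set of edges strictly between edges `e` and `f`
on the unique tree path connecting them (an edge `g ∉ {e,f}` lies on this path
iff it belongs to every walk containing both `e` and `f`). -/

open SimpleGraph

variable {V : Type*}

/-- The set of edges lying strictly between edges `e` and `f` on the tree path
connecting them (excluding `e` and `f`). -/
def edgesBetween (G : SimpleGraph V) (e f : Sym2 V) : Set (Sym2 V) :=
  {g | g ∈ G.edgeSet ∧ g ≠ e ∧ g ≠ f ∧
    ∀ (a b : V) (w : G.Walk a b), e ∈ w.edges → f ∈ w.edges → g ∈ w.edges}

/-- `f` is an adjacent superior of `e`: `r e < r f` and every edge `g` on the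
path between `e` and `f` satisfies `r g < r e`. -/
def AdjSup (G : SimpleGraph V) (r : Sym2 V → ℕ) (e f : Sym2 V) : Prop :=
  f ∈ G.edgeSet ∧ r e < r f ∧ ∀ g ∈ edgesBetween G e f, r g < r e

/-- `f` is an adjacent inferior of `e`: `r f < r e` and every edge `g` on the
path between `e` and `f` satisfies `r g < r e`. -/
def AdjInf (G : SimpleGraph V) (r : Sym2 V → ℕ) (e f : Sym2 V) : Prop :=
  f ∈ G.edgeSet ∧ r f < r e ∧ ∀ g ∈ edgesBetween G e f, r g < r e

/-- `f` is the SLD parent of `e`: the minimum-rank adjacent superior of `e`. -/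
def IsParent (G : SimpleGraph V) (r : Sym2 V → ℕ) (e f : Sym2 V) : Prop :=
  AdjSup G r e f ∧ ∀ g, AdjSup G r e g → r f ≤ r g

/-- The spine of `e`: the set of edges obtained by iterating the SLD parent
function starting from `e` (including `e` itself). -/
def spine (G : SimpleGraph V) (r : Sym2 V → ℕ) (e : Sym2 V) : Set (Sym2 V) :=
  {f | Relation.ReflTransGen (IsParent G r) e f}

/-! In a tree an edge `f` lies on the spine of `m` as soon as `r m < r f` and every edge
strictly between `m` and `f` has rank below `r f`; conversely every edge between `m` and a
spine element `f` is bounded by a spine element of rank below `r f`.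

Because `G1` and `G2` meet only in `v`, the edges between two edges of `G1` are the same in
`G1` and in `G1 ⊔ G2`, so for `e ∈ spine1(e1*)` the adjacent superiors of `e` lying in `G1`
are unchanged. An adjacent superior `h` of `e` lying in `G2` is reached through `v`: the edges
between `e2*` and `h` lie between `e` and `h`, and `r e2* < r h` because `e2*` has least rank
at `v`, so `h ∈ spine2(e2*)` with `r e < r h`. Conversely the least such spine element `f0` is
an adjacent superior of `e`, since the path from `e` to `f0` passes through `e1*` and `e2*`,
and by the bound above all its edges have rank below `r e`. Hence `p(e)` is the lower of
`p1(e)` and `f0`. -/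

namespace SimpleGraph

variable {G : SimpleGraph V}

lemma Walk.exists_walk_edges_subset {a b x y : V} (w : G.Walk a b) (hx : x ∈ w.support)
    (hy : y ∈ w.support) : ∃ u : G.Walk x y, u.edges ⊆ w.edges := by
  classical
  refine ⟨(w.takeUntil x hx).reverse.append (w.takeUntil y hy), fun g hg => ?_⟩
  rw [edges_append, edges_reverse, List.mem_append, List.mem_reverse] at hg
  exact hg.elim (fun h => w.edges_takeUntil_subset_edges hx h)
    (fun h => w.edges_takeUntil_subset_edges hy h)

lemma Walk.exists_walk_edges_subset_append {a₁ b₁ a₂ b₂ x : V} (w₁ : G.Walk a₁ b₁)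
    (w₂ : G.Walk a₂ b₂) (h₁ : x ∈ w₁.support) (h₂ : x ∈ w₂.support) :
    ∃ W : G.Walk a₁ b₂,
      w₁.edges ⊆ W.edges ∧ w₂.edges ⊆ W.edges ∧ W.edges ⊆ w₁.edges ++ w₂.edges := by
  obtain ⟨u₁, hu₁⟩ := w₁.exists_walk_edges_subset w₁.end_mem_support h₁
  obtain ⟨u₂, hu₂⟩ := w₂.exists_walk_edges_subset h₂ w₂.start_mem_support
  refine ⟨w₁.append (u₁.append (u₂.append w₂)), ?_, ?_, ?_⟩ <;> intro g <;>
    simp only [edges_append, List.mem_append] <;> grind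

lemma mem_support_of_mem_edgeSet {e : Sym2 V} {v : V} (he : e ∈ G.edgeSet) (hv : v ∈ e) :
    v ∈ G.support := by
  obtain ⟨w, rfl⟩ := Sym2.mem_iff_exists.1 hv
  exact Adj.mem_support_left he

lemma reachable_of_mem_support (hG : (G.induce G.support).Preconnected) {x y : V}
    (hx : x ∈ G.support) (hy : y ∈ G.support) : G.Reachable x y :=
  (hG ⟨x, hx⟩ ⟨y, hy⟩).map (Embedding.induce G.support).toHom

lemma isAcyclic_of_induce_support (hG : (G.induce G.support).IsAcyclic) : G.IsAcyclic := by
  intro u c hc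
  have hs : ∀ x ∈ c.support, x ∈ G.support :=
    fun x hx => mem_support_of_mem_walk_support c hc.not_nil hx
  refine hG (c.induce G.support hs) ?_
  rw [← Walk.isCycle_map_iff_of_injective (f := (Embedding.induce G.support).toHom)
    Subtype.val_injective, Walk.map_induce]
  exact hc

lemma IsAcyclic.edges_subset_of_isPath (hG : G.IsAcyclic) {a b : V} {P : G.Walk a b}
    (hP : P.IsPath) (u : G.Walk a b) : P.edges ⊆ u.edges := by
  classical
  have : u.bypass = P :=
    congrArg Subtype.val ((hG.subsingleton_path a b).elim ⟨_, u.bypass_isPath⟩ ⟨P, hP⟩)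
  exact this ▸ u.edges_bypass_subset_edges

end SimpleGraph

section EdgesBetween

variable {G : SimpleGraph V}

lemma edgesBetween_comm (e f : Sym2 V) : edgesBetween G e f = edgesBetween G f e := by
  ext g
  simp only [edgesBetween, Set.mem_ofPred_eq]
  grind

lemma edgesBetween_eq_empty_of_mem {e f : Sym2 V} {v : V} (he : e ∈ G.edgeSet)
    (hf : f ∈ G.edgeSet) (hve : v ∈ e) (hvf : v ∈ f) : edgesBetween G e f = ∅ := by
  obtain ⟨x, rfl⟩ := Sym2.mem_iff_exists.1 hve
  obtain ⟨y, rfl⟩ := Sym2.mem_iff_exists.1 hvf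
  refine Set.eq_empty_of_forall_notMem fun g ⟨_, hge, hgf, hall⟩ => ?_
  rw [mem_edgeSet] at he hf
  have := hall _ _ (.cons he.symm (.cons hf .nil)) (by simp [Sym2.eq_swap]) (by simp)
  simp only [Walk.edges_cons, Walk.edges_nil, List.mem_cons, List.not_mem_nil, or_false,
    Sym2.eq_swap (a := x)] at this
  tauto

lemma edgesBetween_subset_union (e f g : Sym2 V) :
    edgesBetween G e g ⊆ edgesBetween G e f ∪ {f} ∪ edgesBetween G f g := by
  rintro x ⟨hx, hxe, hxg, hall⟩
  by_contra hcon
  simp only [Set.mem_union, Set.mem_singleton_iff, not_or] at hcon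
  obtain ⟨⟨h₁, hxf⟩, h₂⟩ := hcon
  simp only [edgesBetween, Set.mem_ofPred_eq, not_and, not_forall] at h₁ h₂
  obtain ⟨a₁, b₁, w₁, hew₁, hfw₁, hxw₁⟩ := h₁ hx hxe hxf
  obtain ⟨a₂, b₂, w₂, hfw₂, hgw₂, hxw₂⟩ := h₂ hx hxf hxg
  obtain ⟨p, hp⟩ : ∃ p, p ∈ f := ⟨f.out.1, Sym2.out_fst_mem f⟩
  obtain ⟨W, hW₁, hW₂, hW⟩ := w₁.exists_walk_edges_subset_append w₂
    (Walk.mem_support_of_mem_edges hfw₁ hp) (Walk.mem_support_of_mem_edges hfw₂ hp)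
  rcases List.mem_append.1 (hW (hall _ _ W (hW₁ hew₁) (hW₂ hgw₂))) with h | h
  exacts [hxw₁ h, hxw₂ h]

lemma edgesBetween_subset_of_le {H : SimpleGraph V} (hle : H ≤ G) {x y : Sym2 V} {a b : V}
    (w : H.Walk a b) (hx : x ∈ w.edges) (hy : y ∈ w.edges) :
    edgesBetween G x y ⊆ edgesBetween H x y := by
  rintro g ⟨-, hgx, hgy, hall⟩
  have hmem : ∀ (a b : V) (w : H.Walk a b), x ∈ w.edges → y ∈ w.edges → g ∈ w.edges := by
    intro a b w
    simpa only [Walk.edges_mapLe_eq_edges] using hall a b (w.mapLe hle)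
  exact ⟨w.edges_subset_edgeSet (hmem a b w hx hy), hgx, hgy, hmem⟩

lemma exists_walk_mem_edges (hG : (G.induce G.support).Preconnected) {x y : Sym2 V}
    (hx : x ∈ G.edgeSet) (hy : y ∈ G.edgeSet) :
    ∃ (a b : V) (w : G.Walk a b), x ∈ w.edges ∧ y ∈ w.edges := by
  induction x using Sym2.ind with | _ a a' =>
  induction y using Sym2.ind with | _ b b' =>
  rw [mem_edgeSet] at hx hy
  obtain ⟨w⟩ := reachable_of_mem_support hG hx.mem_support_right
    hy.mem_support_left
  exact ⟨a, b', .cons hx (w.concat hy), by simp, by simp⟩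

lemma exists_walk_mem_edges_notMem_edges (hG : (G.induce G.support).Preconnected)
    {m : Sym2 V} (hm : m ∈ G.edgeSet) {c d : V} (hcd : G.Adj c d) (hne : m ≠ s(c, d)) :
    ∃ (a t t' : V) (W : G.Walk a t) (_ : G.Adj t t'),
      s(t, t') = s(c, d) ∧ m ∈ W.edges ∧ s(c, d) ∉ W.edges := by
  classical
  induction m using Sym2.ind with | _ a b =>
  rw [mem_edgeSet] at hm
  obtain ⟨P, hP⟩ := (reachable_of_mem_support hG hm.mem_support_right
    hcd.mem_support_left).exists_isPath
  by_cases hf : s(c, d) ∈ P.edges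
  · have hd : d ∈ P.support := P.snd_mem_support_of_mem_edges hf
    refine ⟨a, d, c, .cons hm (P.takeUntil d hd), G.adj_symm hcd, Sym2.eq_swap, by simp, ?_⟩
    simp only [Walk.edges_cons, List.mem_cons, not_or]
    exact ⟨Ne.symm hne, fun h => Walk.endpoint_notMem_support_takeUntil hP hd hcd.ne
      ((P.takeUntil d hd).fst_mem_support_of_mem_edges h)⟩
  · exact ⟨a, c, d, .cons hm P, hcd, rfl, by simp, by simp [hf, Ne.symm hne]⟩

lemma notMem_edgesBetween_of_mem (hG : (G.induce G.support).Preconnected) {m f e : Sym2 V}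
    (hm : m ∈ G.edgeSet) (hf : f ∈ G.edgeSet) (he : e ∈ edgesBetween G m f) :
    f ∉ edgesBetween G m e := by
  induction f using Sym2.ind with | _ c d =>
  have hmf : m ≠ s(c, d) := by
    rintro rfl
    rwa [edgesBetween_eq_empty_of_mem hf hf (Sym2.mem_mk_left c d) (Sym2.mem_mk_left c d)] at he
  rw [mem_edgeSet] at hf
  obtain ⟨a, t, t', W, h, hW, hmW, hfW⟩ := exists_walk_mem_edges_notMem_edges hG hm hf hmf
  have heW : e ∈ W.edges := by
    have := he.2.2.2 _ _ (W.concat h) (by simp [hmW]) (by simp [hW])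
    simp only [Walk.edges_concat, List.concat_eq_append, List.mem_append, List.mem_singleton,
      hW] at this
    exact this.resolve_right he.2.2.1
  exact fun hfe => hfW (hfe.2.2.2 _ _ W hmW heW)

lemma edgesBetween_subset_of_mem (hG : (G.induce G.support).Preconnected) {m f e : Sym2 V}
    (hm : m ∈ G.edgeSet) (hf : f ∈ G.edgeSet) (he : e ∈ edgesBetween G m f) :
    edgesBetween G m e ⊆ edgesBetween G m f := fun _ hg =>
  ⟨hg.1, hg.2.1, fun hgf => notMem_edgesBetween_of_mem hG hm hf he (hgf ▸ hg),
    fun a b w hmw hfw => hg.2.2.2 a b w hmw (he.2.2.2 a b w hmw hfw)⟩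

end EdgesBetween

section Spine

variable {G : SimpleGraph V} {r : Sym2 V → ℕ}

lemma exists_isParent_of_adjSup {e f : Sym2 V} (hf : AdjSup G r e f) :
    ∃ p, IsParent G r e p := by
  classical
  have hex : ∃ n, ∃ g, AdjSup G r e g ∧ r g = n := ⟨r f, f, hf, rfl⟩
  obtain ⟨p, hp, hpn⟩ := Nat.find_spec hex
  exact ⟨p, hp, fun g hg => hpn ▸ Nat.find_min' hex ⟨g, hg, rfl⟩⟩

lemma spine_subset_edgeSet {m : Sym2 V} (hm : m ∈ G.edgeSet) : spine G r m ⊆ G.edgeSet := by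
  intro f hf
  induction hf with
  | refl => exact hm
  | tail _ hp _ => exact hp.1.1

lemma adjSup_of_adjSup_of_lt {e p f : Sym2 V} (hp : AdjSup G r e p) (hf : AdjSup G r e f)
    (hpf : r p < r f) : AdjSup G r p f := by
  refine ⟨hf.1, hpf, fun g hg => ?_⟩
  rcases edgesBetween_subset_union p e f hg with (hg | rfl) | hg
  · rw [edgesBetween_comm] at hg
    exact (hp.2.2 g hg).trans hp.2.1
  · exact hp.2.1
  · exact (hf.2.2 g hg).trans hp.2.1

lemma mem_spine_of_adjSup (hr : Set.InjOn r G.edgeSet) {m e f : Sym2 V}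
    (he : e ∈ spine G r m) (hf : AdjSup G r e f) : f ∈ spine G r m := by
  induction hn : r f - r e using Nat.strong_induction_on generalizing e with
  | _ n ih =>
  obtain ⟨p, hp⟩ := exists_isParent_of_adjSup hf
  have hpm : p ∈ spine G r m := he.tail hp
  rcases (hp.2 f hf).eq_or_lt with hpf | hpf
  · rwa [← hr hp.1.1 hf.1 hpf]
  · exact ih (r f - r p) (by have := hp.1.2.1; omega) hpm
      (adjSup_of_adjSup_of_lt hp.1 hf hpf) rfl

lemma mem_spine_of_forall_edgesBetween_lt (hG : (G.induce G.support).Preconnected)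
    (hr : Set.InjOn r G.edgeSet) {m f : Sym2 V} (hm : m ∈ G.edgeSet) (hf : f ∈ G.edgeSet)
    (hmf : r m < r f) (hlt : ∀ g ∈ edgesBetween G m f, r g < r f) : f ∈ spine G r m := by
  induction hn : r f - r m using Nat.strong_induction_on generalizing m f with
  | _ n ih =>
  by_cases hsup : ∀ g ∈ edgesBetween G m f, r g < r m
  · exact mem_spine_of_adjSup hr .refl ⟨hf, hmf, hsup⟩
  push Not at hsup
  obtain ⟨g₀, hg₀, hmg₀⟩ := hsup
  -- `e` is a maximum-rank edge between `m` and `f`; it splits the path into two shorter ones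
  obtain ⟨e, he, hmax⟩ : ∃ e ∈ edgesBetween G m f, ∀ g ∈ edgesBetween G m f, r g ≤ r e := by
    have hbdd : BddAbove (r '' edgesBetween G m f) :=
      ⟨r f, Set.forall_mem_image.2 fun g hg => (hlt g hg).le⟩
    obtain ⟨e, he, hre⟩ := Nat.sSup_mem ((Set.image_nonempty).2 ⟨g₀, hg₀⟩) hbdd
    exact ⟨e, he, fun g hg => hre ▸ le_csSup hbdd (Set.mem_image_of_mem r hg)⟩
  have hme : r m < r e :=
    (hmg₀.trans (hmax g₀ hg₀)).lt_of_ne fun h => he.2.1 (hr he.1 hm h.symm)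
  have hef : r e < r f := hlt e he
  have hsub := edgesBetween_subset_of_mem hG hm hf he
  have hsub' : edgesBetween G e f ⊆ edgesBetween G m f := by
    rw [edgesBetween_comm e, edgesBetween_comm m]
    exact edgesBetween_subset_of_mem hG hf hm (edgesBetween_comm m f ▸ he)
  have hme' : e ∈ spine G r m := ih (r e - r m) (by omega) hm he.1 hme
    (fun g hg => (hmax g (hsub hg)).lt_of_ne fun h => hg.2.2.1 (hr hg.1 he.1 h)) rfl
  exact hme'.trans (ih (r f - r e) (by omega) he.1 hf hef (fun g hg => hlt g (hsub' hg)) rfl)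

lemma exists_mem_spine_of_mem_edgesBetween {m f g : Sym2 V} (hm : m ∈ G.edgeSet)
    (hf : f ∈ spine G r m) (hg : g ∈ insert m (edgesBetween G m f)) (hgf : g ≠ f) :
    ∃ s ∈ spine G r m, r g ≤ r s ∧ r s < r f := by
  induction hf with
  | refl =>
    obtain ⟨x, hx⟩ : ∃ x, x ∈ m := ⟨m.out.1, Sym2.out_fst_mem m⟩
    rw [edgesBetween_eq_empty_of_mem hm hm hx hx] at hg
    exact absurd (by simpa using hg) hgf
  | @tail f' f'' hf' hp ih =>
    by_cases hgf' : g = f'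
    · exact ⟨f', hf', hgf' ▸ le_rfl, hp.1.2.1⟩
    have hg' : g ∈ insert m (edgesBetween G m f') ∨ g ∈ edgesBetween G f' f'' := by
      rcases hg with rfl | hg
      · exact .inl (Set.mem_insert _ _)
      rcases edgesBetween_subset_union m f' f'' hg with (hg | hg) | hg
      · exact .inl (Set.mem_insert_of_mem _ hg)
      · exact absurd hg hgf'
      · exact .inr hg
    rcases hg' with hg' | hg'
    · obtain ⟨s, hs, hgs, hsf⟩ := ih hg' hgf'
      exact ⟨s, hs, hgs, hsf.trans hp.1.2.1⟩
    · exact ⟨f', hf', (hp.1.2.2 g hg').le, hp.1.2.1⟩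

end Spine

section Merge

variable {A B : SimpleGraph V} {v : V}

lemma exists_walk_left_of_le_sup (hAB : A.support ∩ B.support ⊆ {v}) {G : SimpleGraph V}
    (hG : G ≤ A ⊔ B) {a b : V} (u : G.Walk a b) (hb : b ∈ A.support) :
    (a ∈ A.support → ∃ w : A.Walk a b, w.edges ⊆ u.edges) ∧
      (a ∈ B.support → ∃ w : A.Walk v b, w.edges ⊆ u.edges) := by
  induction u with
  | nil =>
    refine ⟨fun _ => ⟨.nil, by simp⟩, fun ha => ?_⟩
    obtain rfl : _ = v := hAB ⟨hb, ha⟩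
    exact ⟨.nil, by simp⟩
  | cons h p ih =>
    obtain ⟨ih₁, ih₂⟩ := ih hb
    rcases hG h with hA | hB
    · obtain ⟨w, hw⟩ := ih₁ hA.mem_support_right
      have hw' : (Walk.cons hA w).edges ⊆ (Walk.cons h p).edges :=
        List.cons_subset_cons _ hw
      refine ⟨fun _ => ⟨_, hw'⟩, fun ha => ?_⟩
      obtain rfl : _ = v := hAB ⟨hA.mem_support_left, ha⟩
      exact ⟨_, hw'⟩
    · obtain ⟨w, hw⟩ := ih₂ hB.mem_support_right
      have hw' : w.edges ⊆ (Walk.cons h p).edges := List.Subset.trans hw (List.subset_cons_self _ _)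
      refine ⟨fun ha => ?_, fun _ => ⟨w, hw'⟩⟩
      obtain rfl : _ = v := hAB ⟨ha, hB.mem_support_left⟩
      exact ⟨w, hw'⟩

lemma edgesBetween_sup_left (hA : (A.induce A.support).Preconnected)
    (hAB : A.support ∩ B.support ⊆ {v}) {x y : Sym2 V} (hx : x ∈ A.edgeSet)
    (hy : y ∈ A.edgeSet) : edgesBetween (A ⊔ B) x y = edgesBetween A x y := by
  refine subset_antisymm ?_ ?_
  · obtain ⟨a, b, w, hxw, hyw⟩ := exists_walk_mem_edges hA hx hy
    exact edgesBetween_subset_of_le le_sup_left w hxw hyw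
  rintro g ⟨hg, hgx, hgy, hall⟩
  refine ⟨edgeSet_mono le_sup_left hg, hgx, hgy, fun a b w hxw hyw => ?_⟩
  induction x using Sym2.ind with | _ x₁ x₂ =>
  induction y using Sym2.ind with | _ y₁ y₂ =>
  rw [mem_edgeSet] at hx hy
  obtain ⟨u, hu⟩ := w.exists_walk_edges_subset (w.fst_mem_support_of_mem_edges hxw)
    (w.fst_mem_support_of_mem_edges hyw)
  obtain ⟨u', hu'⟩ := (exists_walk_left_of_le_sup hAB le_rfl u
    hy.mem_support_left).1 hx.mem_support_left
  have := hall _ _ ((Walk.cons hx.symm u').concat hy) (by simp [Sym2.eq_swap]) (by simp)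
  simp only [Walk.edges_concat, Walk.edges_cons, List.concat_eq_append, List.mem_append,
    List.mem_cons, List.not_mem_nil, or_false, Sym2.eq_swap (a := x₂)] at this
  rcases this with (h | h) | h
  exacts [absurd h hgx, hu (hu' h), absurd h hgy]

lemma exists_walk_right_of_mem_support (hAB : A.support ∩ B.support ⊆ {v}) {a b c : V}
    (w : (A ⊔ B).Walk a b) {e : Sym2 V} (he : e ∈ A.edgeSet) (hew : e ∈ w.edges)
    (hc : c ∈ B.support) (hcw : c ∈ w.support) : ∃ u : B.Walk v c, u.edges ⊆ w.edges := by
  induction e using Sym2.ind with | _ x y =>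
  rw [mem_edgeSet] at he
  obtain ⟨u, hu⟩ := w.exists_walk_edges_subset (w.fst_mem_support_of_mem_edges hew) hcw
  obtain ⟨u', hu'⟩ := (exists_walk_left_of_le_sup (Set.inter_comm A.support _ ▸ hAB)
    (sup_comm A B).le u hc).2 he.mem_support_left
  exact ⟨u', List.Subset.trans hu' hu⟩

lemma edgesBetween_subset_edgesBetween_sup (hAB : A.support ∩ B.support ⊆ {v})
    (hdisj : Disjoint A.edgeSet B.edgeSet) {e e₂ h : Sym2 V} (he : e ∈ A.edgeSet)
    (he₂ : e₂ ∈ B.edgeSet) (hv : v ∈ e₂) (hh : h ∈ B.edgeSet) :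
    edgesBetween B e₂ h ⊆ edgesBetween (A ⊔ B) e h := by
  rintro g ⟨hg, hge₂, hgh, hall⟩
  refine ⟨edgeSet_mono le_sup_right hg, fun hge => hdisj.ne_of_mem he hg hge.symm, hgh,
    fun a b w hew hhw => ?_⟩
  induction h using Sym2.ind with | _ c d =>
  obtain ⟨z, rfl⟩ := Sym2.mem_iff_exists.1 hv
  rw [mem_edgeSet] at he₂ hh
  obtain ⟨u, hu⟩ := exists_walk_right_of_mem_support hAB w he hew hh.mem_support_left
    (w.fst_mem_support_of_mem_edges hhw)
  have := hall _ _ (.cons he₂.symm (u.concat hh)) (by simp [Sym2.eq_swap]) (by simp)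
  simp only [Walk.edges_concat, Walk.edges_cons, List.concat_eq_append, List.mem_append,
    List.mem_cons, List.not_mem_nil, or_false, Sym2.eq_swap (a := z)] at this
  rcases this with h | h | h
  exacts [absurd h hge₂, hu h, absurd h hgh]

lemma exists_mem_edgesBetween_sup_of_notMem (hB : B.IsAcyclic)
    (hBc : (B.induce B.support).Preconnected) (hAB : A.support ∩ B.support ⊆ {v})
    (hdisj : Disjoint A.edgeSet B.edgeSet) {e h : Sym2 V} (he : e ∈ A.edgeSet)
    (hh : h ∈ B.edgeSet) (hv : v ∈ B.support) (hvh : v ∉ h) :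
    ∃ g ∈ B.edgeSet, v ∈ g ∧ g ∈ edgesBetween (A ⊔ B) e h := by
  induction h using Sym2.ind with | _ c d =>
  rw [mem_edgeSet] at hh
  obtain ⟨P, hP⟩ := (reachable_of_mem_support hBc hv hh.mem_support_left).exists_isPath
  -- the first edge of the path from `v` to `c` lies on every walk from `v` to `c`
  cases P with
  | nil => exact absurd (Sym2.mem_mk_left _ _) hvh
  | @cons _ x _ hvx Q =>
    refine ⟨s(v, x), hvx, Sym2.mem_mk_left _ _, edgeSet_mono le_sup_right hvx,
      fun hge => hdisj.ne_of_mem he hvx hge.symm, fun hgh => hvh (hgh ▸ Sym2.mem_mk_left _ _),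
      fun a b w hew hhw => ?_⟩
    obtain ⟨u, hu⟩ := exists_walk_right_of_mem_support hAB w he hew hh.mem_support_left
      (w.fst_mem_support_of_mem_edges hhw)
    exact hu (hB.edges_subset_of_isPath hP u (by simp))

variable {r : Sym2 V → ℕ}

lemma adjSup_sup_iff (hA : (A.induce A.support).Preconnected)
    (hAB : A.support ∩ B.support ⊆ {v}) {e g : Sym2 V} (he : e ∈ A.edgeSet)
    (hg : g ∈ A.edgeSet) : AdjSup (A ⊔ B) r e g ↔ AdjSup A r e g := by
  simp only [AdjSup, edgesBetween_sup_left hA hAB he hg, hg, edgeSet_mono le_sup_left hg]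

lemma mem_spine_of_adjSup_sup (hB : B.IsAcyclic) (hBc : (B.induce B.support).Preconnected)
    (hAB : A.support ∩ B.support ⊆ {v}) (hdisj : Disjoint A.edgeSet B.edgeSet)
    (hr : Set.InjOn r (A ⊔ B).edgeSet) {e₂ : Sym2 V} (he₂ : e₂ ∈ B.edgeSet) (hv₂ : v ∈ e₂)
    (hmin₂ : ∀ f ∈ B.edgeSet, v ∈ f → r e₂ ≤ r f) {e h : Sym2 V} (he : e ∈ A.edgeSet)
    (hh : h ∈ B.edgeSet) (heh : AdjSup (A ⊔ B) r e h) : h ∈ spine B r e₂ := by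
  have hle : r e₂ ≤ r h := by
    by_cases hvh : v ∈ h
    · exact hmin₂ h hh hvh
    obtain ⟨g, hg, hvg, hgb⟩ := exists_mem_edgesBetween_sup_of_notMem hB hBc hAB hdisj he hh
      (mem_support_of_mem_edgeSet he₂ hv₂) hvh
    calc r e₂ ≤ r g := hmin₂ g hg hvg
      _ ≤ r e := (heh.2.2 g hgb).le
      _ ≤ r h := heh.2.1.le
  rcases hle.eq_or_lt with heq | hlt
  · rw [← hr (edgeSet_mono le_sup_right he₂) (edgeSet_mono le_sup_right hh) heq]
    exact .refl
  exact mem_spine_of_forall_edgesBetween_lt hBc (hr.mono (edgeSet_mono le_sup_right)) he₂ hh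
    hlt fun g hg =>
      (heh.2.2 g (edgesBetween_subset_edgesBetween_sup hAB hdisj he he₂ hv₂ hh hg)).trans heh.2.1

lemma adjSup_sup_of_isLeast (hA : (A.induce A.support).Preconnected)
    (hB : (B.induce B.support).Preconnected) (hAB : A.support ∩ B.support ⊆ {v})
    (hr : Set.InjOn r (A ⊔ B).edgeSet) {e₁ e₂ : Sym2 V} (he₁ : e₁ ∈ A.edgeSet) (hv₁ : v ∈ e₁)
    (he₂ : e₂ ∈ B.edgeSet) (hv₂ : v ∈ e₂) {e f₀ : Sym2 V} (he : e ∈ spine A r e₁)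
    (hf₀ : f₀ ∈ spine B r e₂) (hef₀ : r e < r f₀)
    (hmin : ∀ f ∈ spine B r e₂, r e < r f → r f₀ ≤ r f) : AdjSup (A ⊔ B) r e f₀ := by
  have heA := spine_subset_edgeSet he₁ he
  have hf₀B := spine_subset_edgeSet he₂ hf₀
  refine ⟨edgeSet_mono le_sup_right hf₀B, hef₀, fun g hg => ?_⟩
  -- the path from `e` to `f₀` runs through `e₁`, `v` and `e₂`
  have hsplit : g ∈ insert e₁ (edgesBetween A e₁ e) ∨ g ∈ insert e₂ (edgesBetween B e₂ f₀) := by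
    rcases edgesBetween_subset_union e e₁ f₀ hg with (hg | rfl) | hg
    · rw [edgesBetween_comm, edgesBetween_sup_left hA hAB he₁ heA] at hg
      exact .inl (.inr hg)
    · exact .inl (.inl rfl)
    rcases edgesBetween_subset_union e₁ e₂ f₀ hg with (hg | rfl) | hg
    · rw [edgesBetween_eq_empty_of_mem (edgeSet_mono le_sup_left he₁)
        (edgeSet_mono le_sup_right he₂) hv₁ hv₂] at hg
      exact hg.elim
    · exact .inr (.inl rfl)
    obtain ⟨a, b, w, he₂w, hf₀w⟩ := exists_walk_mem_edges hB he₂ hf₀B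
    exact .inr (.inr (edgesBetween_subset_of_le le_sup_right w he₂w hf₀w hg))
  rcases hsplit with hg' | hg'
  · obtain ⟨s, -, hgs, hse⟩ := exists_mem_spine_of_mem_edgesBetween he₁ he hg' hg.2.1
    exact hgs.trans_lt hse
  · obtain ⟨s, hs, hgs, hsf₀⟩ := exists_mem_spine_of_mem_edgesBetween he₂ hf₀ hg' hg.2.2.1
    have hse : r s ≤ r e := not_lt.1 fun hlt => (hmin s hs hlt).not_gt hsf₀
    exact (hgs.trans hse).lt_of_ne fun h => hg.2.1 (hr hg.1 (edgeSet_mono le_sup_left heA) h)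

lemma isParent_sup_of_mem_spine (hA : (A.induce A.support).Preconnected)
    (hB : (B.induce B.support).IsTree) (hAB : A.support ∩ B.support ⊆ {v})
    (hdisj : Disjoint A.edgeSet B.edgeSet) (hr : Set.InjOn r (A ⊔ B).edgeSet)
    {e₁ e₂ : Sym2 V} (he₁ : e₁ ∈ A.edgeSet) (hv₁ : v ∈ e₁) (he₂ : e₂ ∈ B.edgeSet)
    (hv₂ : v ∈ e₂) (hmin₂ : ∀ f ∈ B.edgeSet, v ∈ f → r e₂ ≤ r f) :
    ∀ e ∈ spine A r e₁,
      (({f ∈ spine B r e₂ | r e < r f} = ∅) →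
        ∀ g, IsParent (A ⊔ B) r e g ↔ IsParent A r e g) ∧
      (∀ f₀ ∈ spine B r e₂, r e < r f₀ →
        (∀ f ∈ spine B r e₂, r e < r f → r f₀ ≤ r f) →
        ((∀ g, IsParent A r e g →
            (r g < r f₀ → IsParent (A ⊔ B) r e g) ∧
            (¬ r g < r f₀ → IsParent (A ⊔ B) r e f₀)) ∧
          ((¬ ∃ g, IsParent A r e g) → IsParent (A ⊔ B) r e f₀))) := by
  intro e he
  have heA := spine_subset_edgeSet he₁ he
  have hBc := hB.connected.preconnected
  have hsplit : ∀ g, AdjSup (A ⊔ B) r e g →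
      AdjSup A r e g ∨ g ∈ spine B r e₂ ∧ r e < r g := by
    intro g hg
    rcases (edgeSet_sup A B ▸ hg.1 : g ∈ A.edgeSet ∪ B.edgeSet) with hgA | hgB
    · exact .inl ((adjSup_sup_iff hA hAB heA hgA).1 hg)
    · exact .inr ⟨mem_spine_of_adjSup_sup (isAcyclic_of_induce_support hB.isAcyclic) hBc hAB
        hdisj hr he₂ hv₂ hmin₂ heA hgB hg, hg.2.1⟩
  have hlift : ∀ {g}, AdjSup A r e g → AdjSup (A ⊔ B) r e g :=
    fun hg => (adjSup_sup_iff hA hAB heA hg.1).2 hg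
  refine ⟨fun hF g => ?_, fun f₀ hf₀ hef₀ hmin => ?_⟩
  · have hsame : ∀ g, AdjSup (A ⊔ B) r e g ↔ AdjSup A r e g := fun g =>
      ⟨fun hg => (hsplit g hg).resolve_right fun h => hF.subset h, hlift⟩
    simp only [IsParent, hsame]
  have hf₀min : ∀ g, AdjSup (A ⊔ B) r e g → ¬ AdjSup A r e g → r f₀ ≤ r g :=
    fun g hg hgA => ((hsplit g hg).resolve_left hgA).elim (hmin g)
  have hf₀sup := adjSup_sup_of_isLeast hA hBc hAB hr he₁ hv₁ he₂ hv₂ he hf₀ hef₀ hmin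
  refine ⟨fun g hg => ⟨fun hgf₀ => ⟨hlift hg.1, fun g' hg' => ?_⟩,
    fun hgf₀ => ⟨hf₀sup, fun g' hg' => ?_⟩⟩, fun hnone => ⟨hf₀sup, fun g' hg' => ?_⟩⟩
  · by_cases hg'A : AdjSup A r e g'
    · exact hg.2 g' hg'A
    · exact hgf₀.le.trans (hf₀min g' hg' hg'A)
  · by_cases hg'A : AdjSup A r e g'
    · exact (not_lt.1 hgf₀).trans (hg.2 g' hg'A)
    · exact hf₀min g' hg' hg'A
  · by_cases hg'A : AdjSup A r e g'
    · exact absurd (exists_isParent_of_adjSup hg'A) hnone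
    · exact hf₀min g' hg' hg'A

end Merge

variable [Fintype V] (G1 G2 : SimpleGraph V) (v : V) (r : Sym2 V → ℕ)
  (e1s e2s : Sym2 V)

theorem stmt8
    (h1 : (G1.induce G1.support).IsTree) (h2 : (G2.induce G2.support).IsTree)
    (hsupp : G1.support ∩ G2.support = {v})
    (hdisj : Disjoint G1.edgeSet G2.edgeSet)
    (hr : Set.InjOn r (G1 ⊔ G2).edgeSet)
    (he1 : e1s ∈ G1.edgeSet ∧ v ∈ e1s ∧ ∀ f ∈ G1.edgeSet, v ∈ f → r e1s ≤ r f)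
    (he2 : e2s ∈ G2.edgeSet ∧ v ∈ e2s ∧ ∀ f ∈ G2.edgeSet, v ∈ f → r e2s ≤ r f) :
    (∀ e ∈ spine G1 r e1s,
      (({f ∈ spine G2 r e2s | r e < r f} = ∅) →
        ∀ g, IsParent (G1 ⊔ G2) r e g ↔ IsParent G1 r e g) ∧
      (∀ f0 ∈ spine G2 r e2s, r e < r f0 →
        (∀ f ∈ spine G2 r e2s, r e < r f → r f0 ≤ r f) →
        ((∀ g, IsParent G1 r e g →
            (r g < r f0 → IsParent (G1 ⊔ G2) r e g) ∧
            (¬ r g < r f0 → IsParent (G1 ⊔ G2) r e f0)) ∧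
          ((¬ ∃ g, IsParent G1 r e g) → IsParent (G1 ⊔ G2) r e f0)))) ∧
    (∀ e ∈ spine G2 r e2s,
      (({f ∈ spine G1 r e1s | r e < r f} = ∅) →
        ∀ g, IsParent (G1 ⊔ G2) r e g ↔ IsParent G2 r e g) ∧
      (∀ f0 ∈ spine G1 r e1s, r e < r f0 →
        (∀ f ∈ spine G1 r e1s, r e < r f → r f0 ≤ r f) →
        ((∀ g, IsParent G2 r e g →
            (r g < r f0 → IsParent (G1 ⊔ G2) r e g) ∧
            (¬ r g < r f0 → IsParent (G1 ⊔ G2) r e f0)) ∧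
          ((¬ ∃ g, IsParent G2 r e g) → IsParent (G1 ⊔ G2) r e f0)))) := by
  obtain ⟨he1, hv1, hmin1⟩ := he1
  obtain ⟨he2, hv2, hmin2⟩ := he2
  refine ⟨isParent_sup_of_mem_spine h1.connected.preconnected h2 hsupp.subset hdisj hr
    he1 hv1 he2 hv2 hmin2, ?_⟩
  have hr' : Set.InjOn r (G2 ⊔ G1).edgeSet := sup_comm G1 G2 ▸ hr
  have h21 := isParent_sup_of_mem_spine h2.connected.preconnected h1
    (Set.inter_comm G1.support _ ▸ hsupp.subset) hdisj.symm hr' he2 hv2 he1 hv1 hmin1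
  rwa [sup_comm G2 G1] at h21
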